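/- Discrete Crum theorem: Let k ≥ 1, V_0 : ℤ → ℝ, and let ψ_1, …, ψ_k : ℤ → ℝ satisfy −Δ²ψ_i(n) + V_0(n)ψ_i(n) = ε_i ψ_i(n+2) for all n ∈ ℤ, for constants ε_1, …, ε_k ∈ ℝ. For 1 ≤ j ≤ k let C_j(n) denote the Casoratian of ψ_1, …, ψ_j, i.e. the determinant of the j×j matrix whose (l, m) entry is ψ_m(n+l) for 0 ≤ l ≤ j−1, 1 ≤ m ≤ j, and set C_0(n) = 1; assume C_j(n) ≠ 0 for all n ∈ ℤ and all 1 ≤ j ≤ k. Define f_j(n) = (C_{j−1}(n) C_j(n+1)) / (C_{j−1}(n+1) C_j(n)) − 1 for 1 ≤ j ≤ k, and define V_i(n) = V_0(n+i) − 2Δ(f_1(n+i) + f_2(n+i−1) + ⋯ + f_i(n+1)) for 1 ≤ i ≤ k (with V_0 the given potential for i = 0). Then for each 1 ≤ i ≤ k the sequence ψ̂_i(n) = (−1)^{i−1} C_i(n)/C_{i−1}(n) satisfies −Δ²ψ̂_i(n) + V_{i−1}(n)ψ̂_i(n) = ε_i ψ̂_i(n+2) for all n ∈ ℤ. Moreover,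 V_i(n) = V_0(n+i) − 2Δ(D_i(n+1)/C_i(n+1)), where D_i(n) is the determinant of the i×i matrix whose first i−1 rows are (ψ_1(n+l), …, ψ_i(n+l)) for l = 0, 1, …, i−2 and whose last row is (ψ_1(n+i), …, ψ_i(n+i)). -/

import Mathlib

/-!
Write `Φⱼ(φ)` for the Casoratian of `ψ₁, …, ψⱼ, φ` divided by `Cⱼ`. The Desnanot–Jacobi
identity for the Casoratian matrix of `ψ₁, …, ψⱼ₊₁, φ` gives
`Φⱼ₊₁(φ)(n) = Φⱼ(φ)(n+1) - (u(n+1)/u(n)) Φⱼ(φ)(n)` with `u = Φⱼ(ψⱼ₊₁) = Cⱼ₊₁/Cⱼ`: passing from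
`j` to `j + 1` is a single Darboux transformation with seed `u`. A Darboux step whose seed `u` is
a nonvanishing solution for the potential `V` carries solutions for `V` to solutions for
`V(· + 1) - 2Δ(u(· + 1)/u)(· + 1)`, and `u(n+1)/u(n) = fⱼ₊₁(n) + 1`, so by induction `Φⱼ(φ)`
solves the equation with potential `Vⱼ`; `ψ̂ᵢ` is `± Φᵢ₋₁(ψᵢ)`. The same identity with a unit
vector as last column gives `Dᵢ₊₁(n)/Cᵢ₊₁(n) = Dᵢ(n+1)/Cᵢ(n+1) + fᵢ₊₁(n) + 1`, which
telescopes the sum defining `Vᵢ`.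
-/

open Matrix

/-- Desnanot–Jacobi identity for `A` bordered by two rows and two columns, via Schur complements. -/
theorem Matrix.det_fromBlocks_mul_det {m R : Type*} [Fintype m] [DecidableEq m] [CommRing R]
    (A : Matrix m m R) (B : Matrix m (Fin 2) R) (C : Matrix (Fin 2) m R)
    (D : Matrix (Fin 2) (Fin 2) R) (hA : IsUnit A.det) :
    (fromBlocks A B C D).det * A.det =
      (fromBlocks A (B.submatrix id ![0]) (C.submatrix ![0] id) (D.submatrix ![0] ![0])).det *
          (fromBlocks A (B.submatrix id ![1]) (C.submatrix ![1] id) (D.submatrix ![1] ![1])).det -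
        (fromBlocks A (B.submatrix id ![1]) (C.submatrix ![0] id) (D.submatrix ![0] ![1])).det *
          (fromBlocks A (B.submatrix id ![0]) (C.submatrix ![1] id)
            (D.submatrix ![1] ![0])).det := by
  have := A.invertibleOfIsUnitDet hA
  have schur_entry (s t : Fin 2) : (D.submatrix ![s] ![t] -
      C.submatrix ![s] id * ⅟A * B.submatrix id ![t]).det = (D - C * ⅟A * B) s t := by
    rw [det_unique]
    rfl
  simp only [det_fromBlocks₁₁, schur_entry, det_fin_two]
  ring

theorem Fin.snoc_snoc_eq_append {β : Type*} {N : ℕ} (u : Fin N → β) (c d : β) :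
    Fin.snoc (Fin.snoc u c : Fin (N + 1) → β) d = Fin.append u ![c, d] := by
  funext i
  refine Fin.lastCases ?_ (fun i => Fin.lastCases ?_ (fun i => ?_) i) i
  · rw [Fin.snoc_last]; exact (Fin.append_right u ![c, d] 1).symm
  · rw [Fin.snoc_castSucc, Fin.snoc_last]; exact (Fin.append_right u ![c, d] 0).symm
  · rw [Fin.snoc_castSucc, Fin.snoc_castSucc]; exact (Fin.append_left u ![c, d] i).symm

theorem Fin.snoc_shift {β : Type*} (ψ : ℕ → β) (j : ℕ) :
    (Fin.snoc (fun m : Fin j => ψ ((m : ℕ) + 1)) (ψ (j + 1)) : Fin (j + 1) → β) =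
      fun m : Fin (j + 1) => ψ ((m : ℕ) + 1) :=
  Fin.snoc_init_self fun m : Fin (j + 1) => ψ ((m : ℕ) + 1)

section Alternant

variable {α R : Type*} [CommRing R] {N : ℕ}

noncomputable def alternant (g : Fin N → α → R) (x : Fin N → α) : R :=
  (of fun l m => g m (x l)).det

theorem alternant_comp_perm (g : Fin N → α → R) (x : Fin N → α) (σ : Equiv.Perm (Fin N)) :
    alternant g (x ∘ σ) = Equiv.Perm.sign σ * alternant g x :=
  det_permute σ (of fun l m => g m (x l))

theorem alternant_cons (g : Fin (N + 1) → α → R) (x : Fin N → α) (a : α) :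
    alternant g (Fin.cons a x) = (-1) ^ N * alternant g (Fin.snoc x a) := by
  have rotate := alternant_comp_perm g (Fin.cons a x) (finRotate (N + 1))
  rw [Function.comp_def, ← Fin.snoc_eq_cons_rotate, sign_finRotate] at rotate
  rw [rotate, ← mul_assoc]
  push_cast
  rw [← pow_add, ← two_mul, pow_mul, neg_one_sq, one_pow, one_mul]

theorem alternant_append {M : ℕ} (g : Fin N → α → R) (G : Fin M → α → R) (y : Fin N → α)
    (Y : Fin M → α) :
    alternant (Fin.append g G) (Fin.append y Y) =
      (fromBlocks (of fun l m => g m (y l)) (of fun l t => G t (y l))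
        (of fun s m => g m (Y s)) (of fun s t => G t (Y s))).det := by
  rw [alternant, ← det_submatrix_equiv_self finSumFinEquiv]
  congr 1
  ext (l | s) (m | t) <;> simp

theorem alternant_snoc_eq_det_fromBlocks (g : Fin N → α → R) (φ : α → R) (y : Fin N → α) (a : α) :
    alternant (Fin.snoc g φ) (Fin.snoc y a) =
      (fromBlocks (of fun l m => g m (y l)) (of fun l (_ : Fin 1) => φ (y l))
        (of fun (_ : Fin 1) m => g m a) (of fun _ _ => φ a)).det := by
  have hg : Fin.snoc g φ = Fin.append g ![φ] := (Fin.append_right_eq_snoc g ![φ]).symm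
  have hy : Fin.snoc y a = Fin.append y ![a] := (Fin.append_right_eq_snoc y ![a]).symm
  rw [hg, hy, alternant_append]
  congr
  all_goals ext; simp

theorem alternant_snoc_snoc_mul (g : Fin N → α → R) (φ₁ φ₂ : α → R) (y : Fin N → α) (a b : α)
    (h : IsUnit (alternant g y)) :
    alternant (Fin.snoc (Fin.snoc g φ₁) φ₂) (Fin.snoc (Fin.snoc y a) b) * alternant g y =
      alternant (Fin.snoc g φ₁) (Fin.snoc y a) * alternant (Fin.snoc g φ₂) (Fin.snoc y b) -
        alternant (Fin.snoc g φ₂) (Fin.snoc y a) * alternant (Fin.snoc g φ₁) (Fin.snoc y b) := by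
  rw [Fin.snoc_snoc_eq_append, Fin.snoc_snoc_eq_append, alternant_append]
  simp only [alternant_snoc_eq_det_fromBlocks]
  rw [alternant]
  convert det_fromBlocks_mul_det _ (of fun l t => ![φ₁, φ₂] t (y l))
    (of fun s m => g m (![a, b] s)) (of fun s t => ![φ₁, φ₂] t (![a, b] s)) h using 4
  all_goals congr 1 <;> ext <;> simp

theorem alternant_snoc_single [DecidableEq α] {r : ℕ} (g : Fin r → α → R) (x : Fin (r + 1) → α)
    (hx : Function.Injective x) (p : Fin (r + 1)) :
    alternant (Fin.snoc g (Pi.single (x p) 1 : α → R)) x =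
      (-1) ^ (p + r : ℕ) * alternant g (x ∘ p.succAbove) := by
  rw [alternant, det_succ_column _ (Fin.last r), Finset.sum_eq_single p]
  · simp only [of_apply, Fin.snoc_last, Pi.single_eq_same, mul_one, Fin.succAbove_last]
    congr 2
    ext l m
    simp
  · intro i _ hi
    simp [hx.ne hi]
  · simp

end Alternant

section Casoratian

variable {R : Type*} [CommRing R] {N : ℕ}

noncomputable def casoratian (g : Fin N → ℤ → R) (n : ℤ) : R :=
  alternant g fun l => n + ((l : ℕ) : ℤ)

noncomputable def skipCasoratian (g : Fin N → ℤ → R) (n : ℤ) : R :=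
  alternant g fun l => n + if (l : ℕ) = N - 1 then (N : ℤ) else ((l : ℕ) : ℤ)

theorem casoratian_fin_zero (g : Fin 0 → ℤ → R) (n : ℤ) : casoratian g n = 1 :=
  det_fin_zero

theorem casoratian_fin_one (g : Fin 1 → ℤ → R) (n : ℤ) : casoratian g n = g 0 n := by
  simp [casoratian, alternant]

theorem skipCasoratian_fin_one (g : Fin 1 → ℤ → R) (n : ℤ) :
    skipCasoratian g n = g 0 (n + 1) := by
  simp [skipCasoratian, alternant]

theorem cons_eq_add_val (n : ℤ) (M : ℕ) :
    (Fin.cons n fun l : Fin M => n + 1 + ((l : ℕ) : ℤ)) =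
      fun l : Fin (M + 1) => n + ((l : ℕ) : ℤ) := by
  funext l
  refine Fin.cases ?_ (fun l => ?_) l
  · simp
  · simp only [Fin.cons_succ, Fin.val_succ]
    push_cast
    ring

theorem snoc_eq_add_val (n : ℤ) (M : ℕ) :
    (Fin.snoc (fun l : Fin M => n + ((l : ℕ) : ℤ)) (n + M) : Fin (M + 1) → ℤ) =
      fun l : Fin (M + 1) => n + ((l : ℕ) : ℤ) := by
  funext l
  refine Fin.lastCases ?_ (fun l => ?_) l <;> simp

theorem add_val_injective (n : ℤ) (M : ℕ) :
    Function.Injective fun l : Fin M => n + ((l : ℕ) : ℤ) := by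
  intro l l' h
  simpa [Fin.val_inj] using h

/-- The rows `n` and `n + N + 1` play the role of the two bordering rows; moving row `n` to the
end costs a sign `(-1) ^ N` on both sides. -/
theorem casoratian_snoc_snoc_mul (g : Fin N → ℤ → R) (φ₁ φ₂ : ℤ → R) (n : ℤ)
    (h : IsUnit (casoratian g (n + 1))) :
    casoratian (Fin.snoc (Fin.snoc g φ₁) φ₂) n * casoratian g (n + 1) =
      casoratian (Fin.snoc g φ₁) n * casoratian (Fin.snoc g φ₂) (n + 1) -
        casoratian (Fin.snoc g φ₂) n * casoratian (Fin.snoc g φ₁) (n + 1) := by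
  have jacobi := alternant_snoc_snoc_mul g φ₁ φ₂ _ (n + 1 + N) n h
  unfold casoratian
  rw [← snoc_eq_add_val (n + 1), ← cons_eq_add_val n N, ← cons_eq_add_val n (N + 1),
    ← snoc_eq_add_val (n + 1), alternant_cons, alternant_cons, alternant_cons]
  linear_combination (-1) ^ (N + 1) * jacobi

theorem casoratian_snoc_single_last (g : Fin N → ℤ → R) (n : ℤ) :
    casoratian (Fin.snoc g (Pi.single (n + N) 1 : ℤ → R)) n = casoratian g n := by
  have laplace := alternant_snoc_single g _ (add_val_injective n (N + 1)) (Fin.last N)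
  simp only [Fin.val_last, ← two_mul, pow_mul, neg_one_sq, one_pow, one_mul,
    Fin.succAbove_last] at laplace
  exact laplace

theorem casoratian_snoc_single_castSucc (g : Fin (N + 1) → ℤ → R) (n : ℤ) :
    casoratian (Fin.snoc g (Pi.single (n + N) 1 : ℤ → R)) n = -skipCasoratian g n := by
  have laplace :=
    alternant_snoc_single g _ (add_val_injective n (N + 2)) (Fin.last N).castSucc
  have skip_points : (fun l => n + (((Fin.last N).castSucc.succAbove l : ℕ) : ℤ)) =
      fun l : Fin (N + 1) =>
        n + if (l : ℕ) = N + 1 - 1 then ((N + 1 : ℕ) : ℤ) else ((l : ℕ) : ℤ) := by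
    funext l
    refine Fin.lastCases ?_ (fun l => ?_) l
    · simp
    · simp [Fin.succAbove_of_castSucc_lt, l.isLt.ne]
  rw [Function.comp_def, skip_points] at laplace
  simp only [Fin.val_castSucc, Fin.val_last] at laplace
  rw [casoratian, laplace, skipCasoratian, ← add_assoc, ← two_mul, pow_succ, pow_mul]
  simp

theorem skipCasoratian_snoc_mul (g : Fin (N + 1) → ℤ → R) (φ : ℤ → R) (n : ℤ)
    (h : IsUnit (casoratian g (n + 1))) :
    skipCasoratian (Fin.snoc g φ) n * casoratian g (n + 1) =
      casoratian (Fin.snoc g φ) n * skipCasoratian g (n + 1) +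
        casoratian g n * casoratian (Fin.snoc g φ) (n + 1) := by
  -- Jacobi's identity with a unit vector as last column; Laplace expansion along that column
  -- turns the Casoratians containing it into `skipCasoratian`s.
  have jacobi := casoratian_snoc_snoc_mul g φ (Pi.single (n + (N + 1 : ℕ)) 1) n h
  rw [casoratian_snoc_single_castSucc, casoratian_snoc_single_last,
    show n + ((N + 1 : ℕ) : ℤ) = n + 1 + N by push_cast; ring,
    casoratian_snoc_single_castSucc] at jacobi
  linear_combination -jacobi

end Casoratian

section DiagonalSum

variable {M : Type*} [AddCommMonoid M]

def diagonalSum (f : ℕ → ℤ → M) (i : ℕ) (n : ℤ) : M :=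
  ∑ j ∈ Finset.Icc 1 i, f j (n + i + 1 - j)

theorem diagonalSum_zero (f : ℕ → ℤ → M) (n : ℤ) : diagonalSum f 0 n = 0 := by
  simp [diagonalSum]

theorem diagonalSum_succ (f : ℕ → ℤ → M) (i : ℕ) (n : ℤ) :
    diagonalSum f (i + 1) n = diagonalSum f i (n + 1) + f (i + 1) (n + 1) := by
  rw [diagonalSum, Finset.sum_Icc_succ_top (by omega), diagonalSum]
  congr 1
  · refine Finset.sum_congr rfl fun j _ => ?_
    congr 1
    push_cast
    ring
  · congr 1
    push_cast
    ring

end DiagonalSum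

section Crum

variable {K : Type*} [Field K]

def SolvesSchrodinger (V : ℤ → K) (e : K) (φ : ℤ → K) : Prop :=
  ∀ n, -(φ (n + 2) - 2 * φ (n + 1) + φ n) + V n * φ n = e * φ (n + 2)

theorem SolvesSchrodinger.const_mul {V φ : ℤ → K} {e : K} (h : SolvesSchrodinger V e φ) (c : K) :
    SolvesSchrodinger V e fun n => c * φ n :=
  fun n => by linear_combination c * h n

theorem SolvesSchrodinger.darboux {V u φ : ℤ → K} {e' e : K} (hu : SolvesSchrodinger V e' u)
    (hu0 : ∀ n, u n ≠ 0) (hφ : SolvesSchrodinger V e φ) :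
    SolvesSchrodinger (fun n => V (n + 1) - 2 * (u (n + 3) / u (n + 2) - u (n + 2) / u (n + 1))) e
      fun n => φ (n + 1) - u (n + 1) / u n * φ n := by
  intro n
  have hu1 := hu (n + 1)
  have hφ1 := hφ (n + 1)
  simp only [add_assoc, show (1 : ℤ) + 1 = 2 by norm_num, show (1 : ℤ) + 2 = 3 by norm_num,
    show (2 : ℤ) + 1 = 3 by norm_num] at hu1 hφ1 ⊢
  have := hu0 n
  have := hu0 (n + 1)
  have := hu0 (n + 2)
  field_simp
  linear_combination -(u n * u (n + 1) * u (n + 3)) * hφ n + u (n + 1) * u (n + 3) * φ n * hu n +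
    u n * u (n + 1) * u (n + 2) * hφ1 - u (n + 1) * u (n + 2) * φ n * hu1

noncomputable def casoratianUpTo (ψ : ℕ → ℤ → K) (j : ℕ) : ℤ → K :=
  casoratian fun m : Fin j => ψ ((m : ℕ) + 1)

noncomputable def crumTransform (ψ : ℕ → ℤ → K) (j : ℕ) (φ : ℤ → K) (n : ℤ) : K :=
  casoratian (Fin.snoc (fun m : Fin j => ψ ((m : ℕ) + 1)) φ) n / casoratianUpTo ψ j n

/-- `fⱼ₊₁ + 1` in the notation of the theorem. -/
noncomputable def casoratianRatio (ψ : ℕ → ℤ → K) (j : ℕ) (n : ℤ) : K :=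
  casoratianUpTo ψ j n * casoratianUpTo ψ (j + 1) (n + 1) /
    (casoratianUpTo ψ j (n + 1) * casoratianUpTo ψ (j + 1) n)

theorem crumTransform_zero (ψ : ℕ → ℤ → K) (φ : ℤ → K) : crumTransform ψ 0 φ = φ := by
  funext n
  simp only [crumTransform, casoratianUpTo, casoratian_fin_one, casoratian_fin_zero, div_one]
  exact congrFun (Fin.snoc_last (α := fun _ => ℤ → K) _ _) n

theorem crumTransform_self (ψ : ℕ → ℤ → K) (j : ℕ) (n : ℤ) :
    crumTransform ψ j (ψ (j + 1)) n = casoratianUpTo ψ (j + 1) n / casoratianUpTo ψ j n := by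
  rw [crumTransform, Fin.snoc_shift]
  rfl

theorem crumTransform_self_div (ψ : ℕ → ℤ → K) (j : ℕ) (n : ℤ) :
    crumTransform ψ j (ψ (j + 1)) (n + 1) / crumTransform ψ j (ψ (j + 1)) n =
      casoratianRatio ψ j n := by
  rw [crumTransform_self, crumTransform_self, div_div_div_eq, casoratianRatio]
  ring

theorem crumTransform_succ {ψ : ℕ → ℤ → K} {j : ℕ} (hj : ∀ n, casoratianUpTo ψ j n ≠ 0)
    (hj' : ∀ n, casoratianUpTo ψ (j + 1) n ≠ 0) (φ : ℤ → K) (n : ℤ) :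
    crumTransform ψ (j + 1) φ n = crumTransform ψ j φ (n + 1) -
      crumTransform ψ j (ψ (j + 1)) (n + 1) / crumTransform ψ j (ψ (j + 1)) n *
        crumTransform ψ j φ n := by
  have jacobi := casoratian_snoc_snoc_mul _ (ψ (j + 1)) φ n (hj (n + 1)).isUnit
  rw [Fin.snoc_shift] at jacobi
  have := hj n
  have := hj (n + 1)
  have := hj' n
  have := hj' (n + 1)
  simp only [crumTransform_self]
  simp only [crumTransform, casoratianUpTo] at *
  field_simp
  linear_combination jacobi

theorem solvesSchrodinger_crumTransform {V₀ : ℤ → K} {ψ : ℕ → ℤ → K} {ε : ℕ → K} {k : ℕ}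
    (hψ : ∀ i, 1 ≤ i → i ≤ k → SolvesSchrodinger V₀ (ε i) (ψ i))
    (hC : ∀ j ≤ k, ∀ n, casoratianUpTo ψ j n ≠ 0) {V : ℕ → ℤ → K} (hV₀ : V 0 = V₀)
    (hV : ∀ j < k, ∀ n, V (j + 1) n =
      V j (n + 1) - 2 * (casoratianRatio ψ j (n + 2) - casoratianRatio ψ j (n + 1)))
    {j : ℕ} (hj : j ≤ k) {φ : ℤ → K} {e : K} (hφ : SolvesSchrodinger V₀ e φ) :
    SolvesSchrodinger (V j) e (crumTransform ψ j φ) := by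
  induction j generalizing φ e with
  | zero => rwa [hV₀, crumTransform_zero]
  | succ j ih =>
    have hu := ih (by omega) (hψ (j + 1) (by omega) hj)
    have hu0 (n : ℤ) : crumTransform ψ j (ψ (j + 1)) n ≠ 0 := by
      rw [crumTransform_self]
      exact div_ne_zero (hC _ hj n) (hC _ (by omega) n)
    convert hu.darboux hu0 (ih (by omega) hφ) using 1
    · funext n
      rw [hV j hj n, ← crumTransform_self_div, ← crumTransform_self_div]
      ring_nf
    · funext n
      exact crumTransform_succ (hC _ (by omega)) (hC _ hj) φ n

theorem skipCasoratian_div_succ {ψ : ℕ → ℤ → K} {N : ℕ} {n : ℤ}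
    (h : casoratianUpTo ψ (N + 1) (n + 1) ≠ 0) (h' : casoratianUpTo ψ (N + 2) n ≠ 0) :
    skipCasoratian (fun m : Fin (N + 2) => ψ ((m : ℕ) + 1)) n / casoratianUpTo ψ (N + 2) n =
      skipCasoratian (fun m : Fin (N + 1) => ψ ((m : ℕ) + 1)) (n + 1) /
          casoratianUpTo ψ (N + 1) (n + 1) +
        casoratianRatio ψ (N + 1) n := by
  have key := skipCasoratian_snoc_mul _ (ψ (N + 2)) n h.isUnit
  rw [Fin.snoc_shift] at key
  rw [casoratianRatio]
  simp only [casoratianUpTo] at *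
  field_simp
  linear_combination key

theorem diagonalSum_eq_skipCasoratian_div {ψ : ℕ → ℤ → K} {k : ℕ} {f : ℕ → ℤ → K}
    (hC : ∀ j ≤ k, ∀ n, casoratianUpTo ψ j n ≠ 0)
    (hf : ∀ j < k, ∀ n, f (j + 1) n = casoratianRatio ψ j n - 1)
    {i : ℕ} (hi : 1 ≤ i) (hik : i ≤ k) (n : ℤ) :
    diagonalSum f i n =
      skipCasoratian (fun m : Fin i => ψ ((m : ℕ) + 1)) (n + 1) / casoratianUpTo ψ i (n + 1) -
        i := by
  induction i, hi using Nat.le_induction generalizing n with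
  | base =>
    rw [show diagonalSum f 1 n = diagonalSum f 0 (n + 1) + f (0 + 1) (n + 1) from
      diagonalSum_succ f 0 n, diagonalSum_zero, hf 0 hik, casoratianRatio]
    simp only [casoratianUpTo, casoratian_fin_zero, casoratian_fin_one, skipCasoratian_fin_one]
    push_cast
    ring_nf
  | succ i hi ih =>
    obtain ⟨N, rfl⟩ : ∃ N, i = N + 1 := ⟨i - 1, by omega⟩
    rw [diagonalSum_succ, ih (by omega), hf _ hik,
      skipCasoratian_div_succ (hC _ (by omega) _) (hC _ hik _)]
    push_cast
    ring_nf

end Crum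

theorem stmt_19_general (k : ℕ) (V0 : ℤ → ℝ)
    (ψ : ℕ → ℤ → ℝ) (ε : ℕ → ℝ)
    (hψ : ∀ i : ℕ, 1 ≤ i → i ≤ k → ∀ n : ℤ,
      -(ψ i (n+2) - 2 * ψ i (n+1) + ψ i n) + V0 n * ψ i n = ε i * ψ i (n+2))
    (C : ℕ → ℤ → ℝ)
    (hC : ∀ (j : ℕ) (n : ℤ),
      C j n = Matrix.det (fun l m : Fin j => ψ ((m : ℕ) + 1) (n + ((l : ℕ) : ℤ))))
    (hCne : ∀ (j : ℕ), 1 ≤ j → j ≤ k → ∀ n : ℤ, C j n ≠ 0)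
    (f : ℕ → ℤ → ℝ)
    (hf : ∀ (j : ℕ), 1 ≤ j → j ≤ k → ∀ n : ℤ,
      f j n = C (j-1) n * C j (n+1) / (C (j-1) (n+1) * C j n) - 1)
    (V : ℕ → ℤ → ℝ)
    (hV : ∀ (i : ℕ), i ≤ k → ∀ n : ℤ,
      V i n = V0 (n + (i : ℤ))
        - 2 * ((∑ j ∈ Finset.Icc 1 i, f j ((n+1) + (i : ℤ) + 1 - (j : ℤ)))
             - (∑ j ∈ Finset.Icc 1 i, f j (n + (i : ℤ) + 1 - (j : ℤ))))) 
    (D : ℕ → ℤ → ℝ)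
    (hD : ∀ (i : ℕ), 1 ≤ i → i ≤ k → ∀ n : ℤ,
      D i n = Matrix.det (fun l m : Fin i =>
        ψ ((m : ℕ) + 1) (n + (if (l : ℕ) = i - 1 then (i : ℤ) else ((l : ℕ) : ℤ)))))
    (ψh : ℕ → ℤ → ℝ)
    (hψh : ∀ (i : ℕ), 1 ≤ i → i ≤ k → ∀ n : ℤ,
      ψh i n = (-1 : ℝ) ^ (i - 1) * C i n / C (i-1) n) :
    (∀ (i : ℕ), 1 ≤ i → i ≤ k → ∀ n : ℤ,
      -(ψh i (n+2) - 2 * ψh i (n+1) + ψh i n) + V (i-1) n * ψh i n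
        = ε i * ψh i (n+2)) ∧
    (∀ (i : ℕ), 1 ≤ i → i ≤ k → ∀ n : ℤ,
      V i n = V0 (n + (i : ℤ))
        - 2 * (D i (n+2) / C i (n+2) - D i (n+1) / C i (n+1))) := by
  have hC' : ∀ j n, C j n = casoratianUpTo ψ j n := hC
  simp only [hC'] at hCne hf hψh
  have hC₀ : ∀ j ≤ k, ∀ n, casoratianUpTo ψ j n ≠ 0 := by
    rintro (_ | j) hj n
    · simp [casoratianUpTo, casoratian_fin_zero]
    · exact hCne _ (by omega) hj n
  have hf' (j : ℕ) (hj : j < k) (n : ℤ) : f (j + 1) n = casoratianRatio ψ j n - 1 := by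
    rw [hf (j + 1) (by omega) hj n, Nat.add_sub_cancel]
    rfl
  have hV' : ∀ i ≤ k, ∀ n,
      V i n = V0 (n + i) - 2 * (diagonalSum f i (n + 1) - diagonalSum f i n) := hV
  have hV₀ : V 0 = V0 := funext fun n => by simp [hV' 0 k.zero_le, diagonalSum_zero]
  have hVrec (j : ℕ) (hj : j < k) (n : ℤ) : V (j + 1) n =
      V j (n + 1) - 2 * (casoratianRatio ψ j (n + 2) - casoratianRatio ψ j (n + 1)) := by
    rw [hV' _ hj, hV' _ hj.le, diagonalSum_succ, diagonalSum_succ, hf' j hj, hf' j hj]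
    push_cast
    ring_nf
  refine ⟨fun i hi hik n => ?_, fun i hi hik n => ?_⟩
  · obtain ⟨j, rfl⟩ : ∃ j, i = j + 1 := ⟨i - 1, by omega⟩
    have hψh' : ψh (j + 1) = fun n => (-1) ^ j * crumTransform ψ j (ψ (j + 1)) n := by
      funext n
      rw [hψh _ hi hik, crumTransform_self, Nat.add_sub_cancel]
      ring
    rw [hψh', Nat.add_sub_cancel]
    exact ((solvesSchrodinger_crumTransform hψ hC₀ hV₀ hVrec (by omega)
      (hψ _ hi hik)).const_mul _) n
  · have hD' : D i = skipCasoratian fun m : Fin i => ψ ((m : ℕ) + 1) := funext (hD i hi hik)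
    rw [hV' i hik, diagonalSum_eq_skipCasoratian_div hC₀ hf' hi hik,
      diagonalSum_eq_skipCasoratian_div hC₀ hf' hi hik, hD', hC', hC', add_assoc n 1 1,
      one_add_one_eq_two]
    ring

/-- discrete Crum theorem: Let ψ₁, …, ψ_k solve
−Δ²ψᵢ + V₀ψᵢ = εᵢψᵢ(·+2). Let Cⱼ(n) be the Casoratian (with C₀ = 1, the empty
determinant), assumed nowhere vanishing for 1 ≤ j ≤ k. With
fⱼ(n) = Cⱼ₋₁(n)Cⱼ(n+1)/(Cⱼ₋₁(n+1)Cⱼ(n)) − 1 and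
Vᵢ(n) = V₀(n+i) − 2Δ(f₁(n+i) + f₂(n+i−1) + ⋯ + fᵢ(n+1)), the functions
ψ̂ᵢ(n) = (−1)^{i−1} Cᵢ(n)/Cᵢ₋₁(n) satisfy −Δ²ψ̂ᵢ + Vᵢ₋₁ψ̂ᵢ = εᵢψ̂ᵢ(·+2), and
Vᵢ(n) = V₀(n+i) − 2Δ(Dᵢ(n+1)/Cᵢ(n+1)), where Dᵢ is the determinant with rows
ψ_m(n), ψ_m(n+1), …, ψ_m(n+i−2), ψ_m(n+i). -/
theorem stmt_19 (k : ℕ) (hk : 1 ≤ k) (V0 : ℤ → ℝ)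
    (ψ : ℕ → ℤ → ℝ) (ε : ℕ → ℝ)
    (hψ : ∀ i : ℕ, 1 ≤ i → i ≤ k → ∀ n : ℤ,
      -(ψ i (n+2) - 2 * ψ i (n+1) + ψ i n) + V0 n * ψ i n = ε i * ψ i (n+2))
    (C : ℕ → ℤ → ℝ)
    (hC : ∀ (j : ℕ) (n : ℤ),
      C j n = Matrix.det (fun l m : Fin j => ψ ((m : ℕ) + 1) (n + ((l : ℕ) : ℤ))))
    (hCne : ∀ (j : ℕ), 1 ≤ j → j ≤ k → ∀ n : ℤ, C j n ≠ 0)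
    (f : ℕ → ℤ → ℝ)
    (hf : ∀ (j : ℕ), 1 ≤ j → j ≤ k → ∀ n : ℤ,
      f j n = C (j-1) n * C j (n+1) / (C (j-1) (n+1) * C j n) - 1)
    (V : ℕ → ℤ → ℝ)
    (hV : ∀ (i : ℕ), i ≤ k → ∀ n : ℤ,
      V i n = V0 (n + (i : ℤ))
        - 2 * ((∑ j ∈ Finset.Icc 1 i, f j ((n+1) + (i : ℤ) + 1 - (j : ℤ)))
             - (∑ j ∈ Finset.Icc 1 i, f j (n + (i : ℤ) + 1 - (j : ℤ))))) 
    (D : ℕ → ℤ → ℝ)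
    (hD : ∀ (i : ℕ), 1 ≤ i → i ≤ k → ∀ n : ℤ,
      D i n = Matrix.det (fun l m : Fin i =>
        ψ ((m : ℕ) + 1) (n + (if (l : ℕ) = i - 1 then (i : ℤ) else ((l : ℕ) : ℤ)))))
    (ψh : ℕ → ℤ → ℝ)
    (hψh : ∀ (i : ℕ), 1 ≤ i → i ≤ k → ∀ n : ℤ,
      ψh i n = (-1 : ℝ) ^ (i - 1) * C i n / C (i-1) n) :
    (∀ (i : ℕ), 1 ≤ i → i ≤ k → ∀ n : ℤ,
      -(ψh i (n+2) - 2 * ψh i (n+1) + ψh i n) + V (i-1) n * ψh i n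
        = ε i * ψh i (n+2)) ∧
    (∀ (i : ℕ), 1 ≤ i → i ≤ k → ∀ n : ℤ,
      V i n = V0 (n + (i : ℤ))
        - 2 * (D i (n+2) / C i (n+2) - D i (n+1) / C i (n+1))) :=
  stmt_19_general k V0 ψ ε hψ C hC hCne f hf V hV D hD ψh hψh
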